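/- Let n/2 < t ≤ n, p ∈ (0,1], and let X ~ Bin(t,p), Y ~ Bin(n−t−1,p) be independent. Then P(X ≤ Y) ≤ 2·exp(−((n/2 − t)²/n)·p). -/

import Mathlib

/-!
Exponential moment method: for `0 < L ≤ 1`, `1{X ≤ Y} ≤ L ^ X * L⁻¹ ^ Y`, so by independence
`P(X ≤ Y) ≤ E[L ^ X] E[L⁻¹ ^ Y] ≤ exp (p (t (L - 1) + m (L⁻¹ - 1)))`. For `t < n` the choice
`L = √(n - t) / √t` turns the exponent into `-p (√t - √(n - t))²`, and
`(√t - √(n - t))² = (2t - n)² / (√t + √(n - t))² ≥ (2t - n)² / (2n)`.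
For `t = n` we have `Y = 0` and `L = 1/2` suffices.
-/

/-- `P(Bin(m,p) = k)`. -/
noncomputable def binPMF (m k : ℕ) (p : ℝ) : ℝ :=
  (m.choose k : ℝ) * p ^ k * (1 - p) ^ (m - k)

open Finset Real

lemma binPMF_nonneg {p : ℝ} (hp0 : 0 ≤ p) (hp1 : p ≤ 1) (m k : ℕ) : 0 ≤ binPMF m k p := by
  have : 0 ≤ 1 - p := by linarith
  unfold binPMF
  positivity

lemma sum_binPMF_mul_pow (m : ℕ) (p c : ℝ) :
    ∑ k ∈ range (m + 1), binPMF m k p * c ^ k = (1 - p + p * c) ^ m := by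
  rw [add_comm (1 - p), add_pow]
  refine sum_congr rfl fun k _ => ?_
  unfold binPMF
  ring

lemma sum_binPMF_mul_pow_le_exp {p c : ℝ} (hp0 : 0 ≤ p) (hp1 : p ≤ 1) (hc : 0 ≤ c) (m : ℕ) :
    ∑ k ∈ range (m + 1), binPMF m k p * c ^ k ≤ exp (m * (p * (c - 1))) := by
  rw [sum_binPMF_mul_pow, exp_nat_mul]
  exact pow_le_pow_left₀ (by nlinarith) (by linarith [add_one_le_exp (p * (c - 1))]) m

lemma sum_sum_ite_le_le_mul {f g : ℕ → ℝ} (hf : ∀ a, 0 ≤ f a) (hg : ∀ b, 0 ≤ g b)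
    {L : ℝ} (hL0 : 0 < L) (hL1 : L ≤ 1) (s s' : Finset ℕ) :
    ∑ a ∈ s, ∑ b ∈ s', (if a ≤ b then f a * g b else 0) ≤
      (∑ a ∈ s, f a * L ^ a) * ∑ b ∈ s', g b * L⁻¹ ^ b := by
  rw [sum_mul_sum]
  gcongr with a _ b _
  split_ifs with hab
  · have hpow : 1 ≤ L ^ a * L⁻¹ ^ b := by
      rw [inv_pow, ← div_eq_mul_inv, one_le_div (by positivity)]
      exact pow_le_pow_of_le_one hL0.le hL1 hab
    calc f a * g b ≤ f a * g b * (L ^ a * L⁻¹ ^ b) :=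
          le_mul_of_one_le_right (mul_nonneg (hf a) (hg b)) hpow
      _ = f a * L ^ a * (g b * L⁻¹ ^ b) := by ring
  · have := hf a
    have := hg b
    positivity

lemma binomial_prob_le_le_exp {p : ℝ} (hp0 : 0 ≤ p) (hp1 : p ≤ 1) {L : ℝ} (hL0 : 0 < L)
    (hL1 : L ≤ 1) (t m : ℕ) :
    ∑ a ∈ range (t + 1), ∑ b ∈ range (m + 1),
        (if a ≤ b then binPMF t a p * binPMF m b p else 0) ≤
      exp (p * (t * (L - 1) + m * (L⁻¹ - 1))) := by
  calc _ ≤ (∑ a ∈ range (t + 1), binPMF t a p * L ^ a) *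
          ∑ b ∈ range (m + 1), binPMF m b p * L⁻¹ ^ b :=
        sum_sum_ite_le_le_mul (binPMF_nonneg hp0 hp1 t) (binPMF_nonneg hp0 hp1 m) hL0 hL1 _ _
    _ ≤ exp (t * (p * (L - 1))) * exp (m * (p * (L⁻¹ - 1))) := by
        gcongr
        · exact sum_nonneg fun b _ => mul_nonneg (binPMF_nonneg hp0 hp1 m b) (by positivity)
        · exact sum_binPMF_mul_pow_le_exp hp0 hp1 hL0.le t
        · exact sum_binPMF_mul_pow_le_exp hp0 hp1 (by positivity) m
    _ = exp (p * (t * (L - 1) + m * (L⁻¹ - 1))) := by rw [← exp_add]; ring_nf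

lemma mul_sub_one_add_mul_inv_sub_one_le {t u m : ℝ} (hu : 0 < u) (hut : u ≤ t) (hm : m ≤ u) :
    t * (√u / √t - 1) + m * ((√u / √t)⁻¹ - 1) ≤ -(√t - √u) ^ 2 := by
  have hsu : 0 < √u := sqrt_pos.2 hu
  have hst : √u ≤ √t := sqrt_le_sqrt hut
  have hst0 : 0 < √t := hsu.trans_le hst
  have hsu2 := sq_sqrt hu.le
  have hst2 := sq_sqrt (hu.le.trans hut)
  have hinv : 0 ≤ (√u / √t)⁻¹ - 1 := by
    rw [inv_div, sub_nonneg, one_le_div (by linarith)]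
    exact hst
  calc t * (√u / √t - 1) + m * ((√u / √t)⁻¹ - 1)
      ≤ t * (√u / √t - 1) + u * ((√u / √t)⁻¹ - 1) := by gcongr
    _ = -(√t - √u) ^ 2 := by
        field_simp
        linear_combination √u * (√t - √u) * hst2 + √t * (√u - √t) * hsu2

lemma sq_div_le_sq_sqrt_sub_sqrt_sub {n t : ℝ} (hnt : n / 2 ≤ t) (htn : t ≤ n) :
    (n / 2 - t) ^ 2 / n ≤ (√t - √(n - t)) ^ 2 := by
  rcases (show 0 ≤ n by linarith).eq_or_lt with rfl | hn
  · simp only [div_zero]; positivity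
  have ht := sq_sqrt (show 0 ≤ t by linarith)
  have hu := sq_sqrt (show 0 ≤ n - t by linarith)
  have hdiff : (√t - √(n - t)) * (√t + √(n - t)) = 2 * t - n := by
    linear_combination ht - hu
  have hsum : (√t + √(n - t)) ^ 2 ≤ 2 * n := by
    nlinarith [sq_nonneg (√t - √(n - t))]
  rw [div_le_iff₀ hn]
  nlinarith [sq_nonneg (√t - √(n - t)), sq_nonneg (n / 2 - t)]

/-- For `n/2 < t ≤ n` and independent `X ~ Bin(t,p)`, `Y ~ Bin(n−t−1,p)`:
`P(X ≤ Y) ≤ 2·exp(−((n/2−t)²/n)·p)`. -/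
theorem stmt_14 (n t : ℕ) (p : ℝ) (hp0 : 0 < p) (hp1 : p ≤ 1)
    (ht : (n : ℝ) / 2 < t) (htn : t ≤ n) :
    (∑ a ∈ Finset.range (t + 1), ∑ b ∈ Finset.range (n - t - 1 + 1),
        (if a ≤ b then binPMF t a p * binPMF (n - t - 1) b p else 0)) ≤
      2 * Real.exp (-(((n : ℝ) / 2 - t) ^ 2 / n) * p) := by
  refine le_trans ?_ (le_mul_of_one_le_left (exp_pos _).le one_le_two)
  rcases htn.lt_or_eq with hlt | rfl
  · have hnt : (n : ℝ) - t ≤ t := by linarith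
    have hm : ((n - t - 1 : ℕ) : ℝ) ≤ n - t := by
      rw [← Nat.cast_sub htn]; exact_mod_cast Nat.sub_le _ _
    have hu : (0 : ℝ) < n - t := sub_pos.2 (by exact_mod_cast hlt)
    have hL0 : 0 < √(n - t) / √t := div_pos (sqrt_pos.2 hu) (sqrt_pos.2 (hu.trans_le hnt))
    have hL1 : √(n - t) / √t ≤ 1 := div_le_one_of_le₀ (sqrt_le_sqrt hnt) (sqrt_nonneg _)
    refine (binomial_prob_le_le_exp hp0.le hp1 hL0 hL1 _ _).trans (exp_le_exp.2 ?_)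
    rw [mul_comm p]
    gcongr
    exact (mul_sub_one_add_mul_inv_sub_one_le hu hnt hm).trans
      (neg_le_neg (sq_div_le_sq_sqrt_sub_sqrt_sub ht.le (by exact_mod_cast htn)))
  · refine (binomial_prob_le_le_exp hp0.le hp1 (L := 1 / 2) (by norm_num) (by norm_num) _ _).trans
      (exp_le_exp.2 ?_)
    have ht0 : (0 : ℝ) < t := by linarith
    rw [Nat.sub_self, Nat.zero_sub, Nat.cast_zero]
    field_simp
    linarith
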